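/- For every t = 1, …, T−1, every j = 0, …, min(h, T−t)−1, and all latent values, Σ_{u_{t+j+1}=1}^k q(u_{t+j+1} | u_{max(t+j+1−h,1)}, …, u_{t+j}, y) / q(u_t | u_{max(t−h,1)}, …, u_{t−1}, u_{t+1}, …, u_{t+j+1}, y) = f(u_{max(t−h,1)}, …, u_{t−1}, u_{t+1}, …, u_{t+j}, y) / f(u_{max(t−h,1)}, …, u_{t+j}, y), where the right-hand side is the ratio of the joint marginal probabilities of the indicated latent coordinates together with y (the numerator omitting u_t). -/

import Mathlib

open Finset

/-- Joint probability `f(u, y) = ∏ t, f(y_t | u_t) p(u_t | u_{max(t−h,1)}, …, u_{t−1})` of a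
latent sequence `u` and observed sequence `y` in an order-`h` hidden Markov model with `T`
occasions (0-indexed), `k` latent states and `m` response categories.  Here `p t u` stands for
the transition probability `p(u_t | u_{max(t−h,1)}, …, u_{t−1})` (it is assumed, as a
hypothesis in the theorems below, to depend on `u` only through the coordinates
`max(t−h,0), …, t` in 0-indexed notation) and `f t y v` for `f(y_t | u_t)`. -/
noncomputable def hmmJoint (T k m : ℕ) (p : Fin T → (Fin T → Fin k) → ℝ)
    (f : Fin T → Fin m → Fin k → ℝ) (y : Fin T → Fin m) (u : Fin T → Fin k) : ℝ :=
  ∏ t : Fin T, f t (y t) (u t) * p t u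

/-- Marginal probability `f(u_S, y)` of the latent coordinates in `S` (at the values given
by `u`) together with the whole observed sequence `y`: the joint `hmmJoint` summed over all
latent coordinates outside `S`. -/
noncomputable def hmmMarg (T k m : ℕ) (p : Fin T → (Fin T → Fin k) → ℝ)
    (f : Fin T → Fin m → Fin k → ℝ) (y : Fin T → Fin m)
    (S : Finset (Fin T)) (u : Fin T → Fin k) : ℝ :=
  ∑ w : Fin T → Fin k, if ∀ s ∈ S, w s = u s then hmmJoint T k m p f y w else 0

/-- Conditional (posterior) probability `q(u_t | u_S, y)` of the latent coordinate `t`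
given the latent coordinates in `S` and the observed data `y`, defined as the ratio of
marginal probabilities `f(u_t, u_S, y) / f(u_S, y)`. -/
noncomputable def hmmCond (T k m : ℕ) (p : Fin T → (Fin T → Fin k) → ℝ)
    (f : Fin T → Fin m → Fin k → ℝ) (y : Fin T → Fin m)
    (t : Fin T) (S : Finset (Fin T)) (u : Fin T → Fin k) : ℝ :=
  hmmMarg T k m p f y (insert t S) u / hmmMarg T k m p f y S u

/-!
Split the joint probability at a time `n` into the factors of times `< n` and those of times
`≥ n`. For a chain of order `h` the first product depends only on the states before `n` and the
second only on the states from `n - h` on, so given the `h` states before `n` the later states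
are conditionally independent of the earlier ones. For `n = t + j + 1` this replaces the
conditioning set of `u_{t+j+1}` by `{t-h, …, t+j}`; adding `t+j+1` to that set gives the same set
as adding `t` to the conditioning set `cond` of `u_t`, so the joint marginals cancel and each
summand is `f(u_cond, y) / f(u_{t-h}, …, u_{t+j}, y)`. Summing `u_{t+j+1}` out of the numerator
gives the claim.
-/

theorem dependsOn_finset_prod {ι κ R : Type*} {α : ι → Type*} [CommMonoid R]
    {g : κ → (∀ i, α i) → R} {I : Finset κ} {S : Set ι} (hg : ∀ j ∈ I, DependsOn (g j) S) :
    DependsOn (fun w => ∏ j ∈ I, g j w) S :=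
  fun _ _ hxy => prod_congr rfl fun j hj => hg j hj hxy

section Marginal

variable {ι α R : Type*} [Fintype ι] [DecidableEq ι] [Fintype α] [DecidableEq α]

noncomputable def marginal [AddCommMonoid R] (g : (ι → α) → R) (S : Finset ι) (u : ι → α) : R :=
  ∑ w, if ∀ s ∈ S, w s = u s then g w else 0

theorem marginal_update_of_notMem [AddCommMonoid R] (g : (ι → α) → R) {S : Finset ι} {a : ι}
    (ha : a ∉ S) (u : ι → α) (v : α) :
    marginal g S (Function.update u a v) = marginal g S u := by
  unfold marginal
  refine sum_congr rfl fun w _ => if_congr (forall₂_congr fun s hs => ?_) rfl rfl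
  rw [Function.update_of_ne (ne_of_mem_of_not_mem hs ha)]

theorem sum_marginal_insert_update [AddCommMonoid R] (g : (ι → α) → R) {S : Finset ι} {a : ι}
    (ha : a ∉ S) (u : ι → α) :
    ∑ v, marginal g (insert a S) (Function.update u a v) = marginal g S u := by
  unfold marginal
  rw [sum_comm]
  refine sum_congr rfl fun w _ => ?_
  have fiber (v : α) : (∀ s ∈ insert a S, w s = Function.update u a v s) ↔
      (w a = v ∧ ∀ s ∈ S, w s = u s) := by
    refine forall_mem_insert _ _ _ |>.trans (and_congr (by simp) (forall₂_congr fun s hs => ?_))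
    rw [Function.update_of_ne (ne_of_mem_of_not_mem hs ha)]
  simp only [fiber, ite_and, sum_ite_eq, mem_univ, if_true]

theorem marginal_pos [AddCommMonoid R] [PartialOrder R] [IsOrderedCancelAddMonoid R]
    {g : (ι → α) → R} (hg : ∀ w, 0 < g w) (S : Finset ι) (u : ι → α) :
    0 < marginal g S u := by
  refine sum_pos' (fun w _ => ?_) ⟨u, mem_univ u, by simp [hg u]⟩
  split_ifs
  exacts [(hg w).le, le_rfl]

theorem marginal_union_mul_marginal [CommSemiring R] {A B : (ι → α) → R} {P C E F : Finset ι}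
    (hA : DependsOn A (P : Set ι)) (hB : DependsOn B ((C : Set ι) ∪ (P : Set ι)ᶜ))
    (hCF : C ⊆ F) (hFP : F ⊆ P) (hEP : ∀ s ∈ E, s ∉ P) (u : ι → α) :
    marginal (A * B) (E ∪ C) u * marginal (A * B) F u =
      marginal (A * B) (E ∪ F) u * marginal (A * B) C u := by
  -- Exchanging the `P`-parts of two paths permutes the pairs counted on either side and,
  -- as both paths agree on the separator `C`, preserves the product of their weights.
  let σ : (ι → α) × (ι → α) → (ι → α) × (ι → α) := fun w =>
    (P.piecewise w.2 w.1, P.piecewise w.1 w.2)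
  have hσ : ∀ w, σ (σ w) = w := fun w => by
    ext s <;> by_cases hs : s ∈ P <;> simp [σ, hs]
  simp only [marginal, sum_mul_sum, ← sum_filter, ← sum_product']
  refine sum_nbij' σ σ ?_ ?_ (fun w _ => hσ w) (fun w _ => hσ w) ?_
  · rintro ⟨w₁, w₂⟩ hw
    simp only [mem_product, mem_filter, mem_univ, true_and, forall_mem_union] at hw ⊢
    obtain ⟨⟨hE, hC⟩, hF⟩ := hw
    refine ⟨⟨fun s hs => ?_, fun s hs => ?_⟩, fun s hs => ?_⟩
    · exact (piecewise_eq_of_notMem _ _ _ (hEP s hs)).trans (hE s hs)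
    · exact (piecewise_eq_of_mem _ _ _ (hFP hs)).trans (hF s hs)
    · exact (piecewise_eq_of_mem _ _ _ (hFP (hCF hs))).trans (hC s hs)
  · rintro ⟨w₁, w₂⟩ hw
    simp only [mem_product, mem_filter, mem_univ, true_and, forall_mem_union] at hw ⊢
    obtain ⟨⟨hE, hF⟩, hC⟩ := hw
    refine ⟨⟨fun s hs => ?_, fun s hs => ?_⟩, fun s hs => ?_⟩
    · exact (piecewise_eq_of_notMem _ _ _ (hEP s hs)).trans (hE s hs)
    · exact (piecewise_eq_of_mem _ _ _ (hFP (hCF hs))).trans (hC s hs)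
    · exact (piecewise_eq_of_mem _ _ _ (hFP hs)).trans (hF s hs)
  · rintro ⟨w₁, w₂⟩ hw
    simp only [mem_product, mem_filter, mem_univ, true_and, forall_mem_union] at hw
    have hC : ∀ s ∈ C, w₁ s = w₂ s := fun s hs => (hw.1.2 s hs).trans (hw.2 s (hCF hs)).symm
    have hA₁ : A (σ (w₁, w₂)).1 = A w₂ := hA fun s hs => piecewise_eq_of_mem _ _ _ hs
    have hA₂ : A (σ (w₁, w₂)).2 = A w₁ := hA fun s hs => piecewise_eq_of_mem _ _ _ hs
    have hB₁ : B (σ (w₁, w₂)).1 = B w₁ := hB fun s hs => by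
      by_cases hsP : s ∈ P
      · simp_all [σ]
      · exact piecewise_eq_of_notMem _ _ _ hsP
    have hB₂ : B (σ (w₁, w₂)).2 = B w₂ := hB fun s hs => by
      by_cases hsP : s ∈ P
      · simp_all [σ]
      · exact piecewise_eq_of_notMem _ _ _ hsP
    simp only [Pi.mul_apply, hA₁, hA₂, hB₁, hB₂]
    ring

end Marginal

def hmmWindow {T : ℕ} (h n : ℕ) : Finset (Fin T) :=
  univ.filter fun s => n - h ≤ s.val ∧ s.val < n

section HiddenMarkov

variable {T k m h : ℕ} {p : Fin T → (Fin T → Fin k) → ℝ} {f : Fin T → Fin m → Fin k → ℝ}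
  (y : Fin T → Fin m)

theorem hmmMarg_eq_marginal : hmmMarg T k m p f y = marginal (hmmJoint T k m p f y) := by
  ext S u
  unfold hmmMarg marginal
  congr!

theorem hmmMarg_pos (hp_pos : ∀ t u, 0 < p t u) (hf_pos : ∀ t yt v, 0 < f t yt v)
    (S : Finset (Fin T)) (u : Fin T → Fin k) : 0 < hmmMarg T k m p f y S u := by
  rw [hmmMarg_eq_marginal]
  exact marginal_pos (fun w => prod_pos fun t _ => mul_pos (hf_pos t (y t) (w t)) (hp_pos t w)) S u

theorem hmmMarg_union_mul_hmmMarg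
    (hp : ∀ t, DependsOn (p t) {s : Fin T | t.val - h ≤ s.val ∧ s.val ≤ t.val})
    (n : ℕ) {E F : Finset (Fin T)} (hE : ∀ s ∈ E, n ≤ s.val) (hF : ∀ s ∈ F, s.val < n)
    (hwindow : hmmWindow h n ⊆ F) (u : Fin T → Fin k) :
    hmmMarg T k m p f y (E ∪ hmmWindow h n) u * hmmMarg T k m p f y F u =
      hmmMarg T k m p f y (E ∪ F) u * hmmMarg T k m p f y (hmmWindow h n) u := by
  have hfactor (t : Fin T) : DependsOn (fun u => f t (y t) (u t) * p t u)
      {s : Fin T | t.val - h ≤ s.val ∧ s.val ≤ t.val} := fun u u' hu => by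
    dsimp only
    rw [hu t ⟨Nat.sub_le _ _, le_rfl⟩, hp t hu]
  have hsplit : hmmJoint T k m p f y =
      (fun u => ∏ t with t.val < n, f t (y t) (u t) * p t u) *
        (fun u => ∏ t with ¬ t.val < n, f t (y t) (u t) * p t u) :=
    funext fun u => (prod_filter_mul_prod_filter_not _ _ _).symm
  rw [hmmMarg_eq_marginal, hsplit]
  refine marginal_union_mul_marginal (P := univ.filter (fun s : Fin T => s.val < n)) ?_ ?_ hwindow
    (fun s hs => by simpa using hF s hs) (fun s hs => by simpa using hE s hs) u
  · refine dependsOn_finset_prod fun t ht => (hfactor t).mono fun s hs => ?_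
    simp only [mem_filter, mem_univ, true_and, Set.mem_ofPred_eq, coe_filter] at ht hs ⊢
    omega
  · refine dependsOn_finset_prod fun t ht => (hfactor t).mono fun s hs => ?_
    simp only [hmmWindow, mem_filter, mem_univ, true_and, Set.mem_ofPred_eq, coe_filter,
      Set.mem_union, Set.mem_compl_iff] at ht hs ⊢
    omega

theorem hmmCond_hmmWindow_eq
    (hp_pos : ∀ t u, 0 < p t u) (hf_pos : ∀ t yt v, 0 < f t yt v)
    (hp : ∀ t, DependsOn (p t) {s : Fin T | t.val - h ≤ s.val ∧ s.val ≤ t.val})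
    (n : ℕ) {a : Fin T} (ha : n ≤ a.val) {F : Finset (Fin T)} (hF : ∀ s ∈ F, s.val < n)
    (hwindow : hmmWindow h n ⊆ F) (u : Fin T → Fin k) :
    hmmCond T k m p f y a (hmmWindow h n) u = hmmCond T k m p f y a F u := by
  rw [hmmCond, hmmCond, div_eq_div_iff (hmmMarg_pos y hp_pos hf_pos _ _).ne'
    (hmmMarg_pos y hp_pos hf_pos _ _).ne', insert_eq, insert_eq]
  exact hmmMarg_union_mul_hmmMarg y hp n (by simpa using ha) hF hwindow u

theorem hmmMarg_update_of_notMem {S : Finset (Fin T)} {a : Fin T} (ha : a ∉ S)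
    (u : Fin T → Fin k) (v : Fin k) :
    hmmMarg T k m p f y S (Function.update u a v) = hmmMarg T k m p f y S u := by
  rw [hmmMarg_eq_marginal]
  exact marginal_update_of_notMem _ ha u v

end HiddenMarkov

/-- For every `t = 1, …, T−1`, `j = 0, …, min(h, T−t)−1`
(0-indexed: `t ≤ T−2`, `j < h`, `t+j+2 ≤ T`), and all latent values,
`Σ_{u_{t+j+1}} q(u_{t+j+1} | u_{max(t+j+1−h,1)}, …, u_{t+j}, y)
   / q(u_t | u_{max(t−h,1)}, …, u_{t−1}, u_{t+1}, …, u_{t+j+1}, y)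
 = f(u_{max(t−h,1)}, …, u_{t−1}, u_{t+1}, …, u_{t+j}, y)
   / f(u_{max(t−h,1)}, …, u_{t+j}, y)`,
the rhs being a ratio of joint marginal probabilities of the indicated latent
coordinates together with `y` (the numerator omitting `u_t`). -/
theorem hmm_sum_conditional_ratio_eq_marginal_ratio
    (T k m h : ℕ)
    (p : Fin T → (Fin T → Fin k) → ℝ) (f : Fin T → Fin m → Fin k → ℝ)
    (hp_pos : ∀ (t : Fin T) (u : Fin T → Fin k), 0 < p t u)
    (hp_dep : ∀ (t : Fin T) (u u' : Fin T → Fin k),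
      (∀ s : Fin T, t.val - h ≤ s.val → s.val ≤ t.val → u s = u' s) → p t u = p t u')
    (hf_pos : ∀ (t : Fin T) (yt : Fin m) (v : Fin k), 0 < f t yt v)
    (y : Fin T → Fin m)
    (t j : ℕ) (hj1 : j < h) (hj2 : t + j + 2 ≤ T)
    (u : Fin T → Fin k) :
    (∑ v : Fin k,
      hmmCond T k m p f y ⟨t + j + 1, by omega⟩
          (Finset.univ.filter (fun s : Fin T =>
            t + j + 1 - h ≤ s.val ∧ s.val < t + j + 1))
          (Function.update u ⟨t + j + 1, by omega⟩ v) /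
        hmmCond T k m p f y ⟨t, by omega⟩
          (Finset.univ.filter (fun s : Fin T =>
            (t - h ≤ s.val ∧ s.val < t) ∨ (t < s.val ∧ s.val ≤ t + j + 1)))
          (Function.update u ⟨t + j + 1, by omega⟩ v)) =
      hmmMarg T k m p f y
        (Finset.univ.filter (fun s : Fin T =>
          (t - h ≤ s.val ∧ s.val < t) ∨ (t < s.val ∧ s.val ≤ t + j))) u /
      hmmMarg T k m p f y
        (Finset.univ.filter (fun s : Fin T =>
          t - h ≤ s.val ∧ s.val ≤ t + j)) u := by
  have hp (t : Fin T) : DependsOn (p t) {s : Fin T | t.val - h ≤ s.val ∧ s.val ≤ t.val} :=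
    fun _ _ hu => hp_dep t _ _ fun s h₁ h₂ => hu s ⟨h₁, h₂⟩
  set a : Fin T := ⟨t + j + 1, by omega⟩
  set cond := univ.filter (fun s : Fin T =>
    (t - h ≤ s.val ∧ s.val < t) ∨ (t < s.val ∧ s.val ≤ t + j + 1))
  set num := univ.filter (fun s : Fin T =>
    (t - h ≤ s.val ∧ s.val < t) ∨ (t < s.val ∧ s.val ≤ t + j))
  set den := univ.filter (fun s : Fin T => t - h ≤ s.val ∧ s.val ≤ t + j)
  have hcond : cond = insert a num := by ext s; simp [cond, num, a, Fin.ext_iff]; omega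
  have hcond_insert : insert ⟨t, by omega⟩ cond = insert a den := by
    ext s; simp [cond, den, a, Fin.ext_iff]; omega
  have hterm (v : Fin k) :
      hmmCond T k m p f y a (hmmWindow h (t + j + 1)) (Function.update u a v) /
        hmmCond T k m p f y ⟨t, by omega⟩ cond (Function.update u a v) =
      hmmMarg T k m p f y cond (Function.update u a v) / hmmMarg T k m p f y den u := by
    have hden_past : ∀ s ∈ den, s.val < t + j + 1 := fun s hs => by simp [den] at hs; omega
    have hwindow : hmmWindow h (t + j + 1) ⊆ den := fun s hs => by
      simp [hmmWindow, den] at hs ⊢; omega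
    rw [hmmCond_hmmWindow_eq y hp_pos hf_pos hp (t + j + 1) (a := a) le_rfl hden_past hwindow,
      hmmCond, hmmCond, hcond_insert,
      hmmMarg_update_of_notMem y (S := den) (a := a) (by simp [den, a]),
      div_div_div_cancel_left' _ _ (hmmMarg_pos y hp_pos hf_pos _ _).ne']
  refine (sum_congr rfl fun v _ => hterm v).trans ?_
  rw [← sum_div, hcond, hmmMarg_eq_marginal, sum_marginal_insert_update _ (by simp [num, a]; omega)]
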